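/- Let E be a poset and L a complete lattice that is dually continuous. Then the collection M of maxitive maps E → L, ordered pointwise, is a continuous lattice in the following sense: (i) for every set 𝒲 of maxitive maps, the pointwise supremum g ↦ ⨆ (w ∈ 𝒲), w g is maxitive (so M is a complete lattice); (ii) for every maxitive v, the set A_v of maxitive maps that are way above v in M is nonempty and downward directed for the pointwise order, and v g = ⨅ (u ∈ A_v), u g for every g ∈ E. -/

import Mathlib

/-!
Every maxitive `v` lies below the maxitive maps way above it, and for each `g` and each
`y ≫ v g` the step map `h ↦ if h ≤ g then y else ⊤` is maxitive and way above `v`: evaluating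
a directed family of maxitive maps at `g` gives a directed family in `L`, to which `y ≫ v g`
applies. The value of the step map at `g` is `y`, so `⨅ u ≫ v, u g ≤ ⨅ y ≫ v g, y = v g` by dual
continuity of `L`. Directedness of the maps way above `v` comes from the fact that the maxitive
maps below two given ones have a maxitive supremum.
-/

/-- `y` is way above `x`. -/
def WayAbove {α : Type*} [Preorder α] (y x : α) : Prop :=
  ∀ D : Set α, D.Nonempty → DirectedOn (· ≥ ·) D → ∀ d : α, IsGLB D d → d ≤ x → ∃ z ∈ D, z ≤ y

/-- A poset is dually continuous. -/
def DuallyContinuous (α : Type*) [Preorder α] : Prop :=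
  ∀ x : α, {y | WayAbove y x}.Nonempty ∧ DirectedOn (· ≥ ·) {y | WayAbove y x} ∧
    IsGLB {y | WayAbove y x} x

/-- A map `v : E → L` between posets is maxitive. -/
def Maxitive {E L : Type*} [Preorder E] [Preorder L] (v : E → L) : Prop :=
  ∀ S : Set E, S.Nonempty → S.Finite → ∀ b : E, IsLUB S b → IsLUB (v '' S) (v b)

/-- `u` is way above `v` in the poset of maxitive maps (ordered pointwise). -/
def WayAboveMax {E L : Type*} [Preorder E] [CompleteLattice L] (u v : E → L) : Prop :=
  ∀ V : Set (E → L), (∀ w ∈ V, Maxitive w) → V.Nonempty →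
    (∀ w ∈ V, ∀ w' ∈ V, ∃ u' ∈ V, (∀ g : E, u' g ≤ w g) ∧ (∀ g : E, u' g ≤ w' g)) →
    (∀ g : E, (⨅ w ∈ V, w g) ≤ v g) → ∃ w ∈ V, ∀ g : E, w g ≤ u g

section

variable {E L : Type*} [Preorder E]

theorem Maxitive.monotone [Preorder L] {v : E → L} (hv : Maxitive v) : Monotone v := by
  intro a b hab
  have hlub : IsLUB ({a, b} : Set E) b :=
    IsGreatest.isLUB ⟨by simp, by simp [upperBounds_insert, hab]⟩
  exact (hv {a, b} (Set.insert_nonempty a {b}) (Set.toFinite _) b hlub).1 ⟨a, by simp, rfl⟩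

theorem maxitive_const [Preorder L] (c : L) : Maxitive (fun _ : E => c) := by
  intro S hS _ _ _
  rw [hS.image_const]
  exact isLUB_singleton

open Classical in
noncomputable def stepMap [Top L] (g : E) (y : L) : E → L :=
  fun h => if h ≤ g then y else ⊤

theorem maxitive_stepMap [Preorder L] [OrderTop L] (g : E) (y : L) :
    Maxitive (stepMap g y) := by
  intro S hS _ b hb
  by_cases hbg : b ≤ g
  · have hS_le : ∀ s ∈ S, s ≤ g := fun s hs => (hb.1 hs).trans hbg
    have himage : stepMap g y '' S = {y} := by
      rw [← hS.image_const y]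
      exact Set.image_congr fun s hs => if_pos (hS_le s hs)
    rw [himage, show stepMap g y b = y from if_pos hbg]
    exact isLUB_singleton
  · obtain ⟨s, hs, hsg⟩ : ∃ s ∈ S, ¬ s ≤ g := by
      by_contra! h
      exact hbg (hb.2 h)
    have htop : ⊤ ∈ stepMap g y '' S := ⟨s, hs, if_neg hsg⟩
    rw [show stepMap g y b = ⊤ from if_neg hbg]
    exact IsGreatest.isLUB ⟨htop, top_mem_upperBounds _⟩

theorem maxitive_biSup [CompleteLattice L] (W : Set (E → L)) (hW : ∀ w ∈ W, Maxitive w) :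
    Maxitive (fun g : E => ⨆ w ∈ W, w g) := by
  intro S hS hSfin b hb
  constructor
  · rintro _ ⟨s, hs, rfl⟩
    exact iSup₂_mono fun w hw => (hW w hw).monotone (hb.1 hs)
  · intro c hc
    refine iSup₂_le fun w hw => ((hW w hw) S hS hSfin b hb).2 ?_
    rintro _ ⟨s, hs, rfl⟩
    exact (le_iSup₂ (f := fun (w : E → L) (_ : w ∈ W) => w s) w hw).trans (hc ⟨s, hs, rfl⟩)

variable [CompleteLattice L] {u v : E → L}

theorem WayAboveMax.le (huv : WayAboveMax u v) (hv : Maxitive v) (g : E) : v g ≤ u g := by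
  obtain ⟨w, rfl, hw⟩ := huv {v} (by simpa using hv) (Set.singleton_nonempty v)
    (by simp) (by simp)
  exact hw g

theorem wayAboveMax_top (v : E → L) : WayAboveMax (fun _ => ⊤) v := by
  rintro V - ⟨w, hw⟩ - -
  exact ⟨w, hw, fun _ => le_top⟩

theorem WayAbove.wayAboveMax_stepMap {g : E} {y : L} (hy : WayAbove y (v g)) :
    WayAboveMax (stepMap g y) v := by
  intro V hVmax hV hVdir hVinf
  have hdir : DirectedOn (· ≥ ·) ((fun w : E → L => w g) '' V) := by
    rintro _ ⟨w₁, hw₁, rfl⟩ _ ⟨w₂, hw₂, rfl⟩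
    obtain ⟨w, hw, hw₁', hw₂'⟩ := hVdir w₁ hw₁ w₂ hw₂
    exact ⟨w g, ⟨w, hw, rfl⟩, hw₁' g, hw₂' g⟩
  obtain ⟨_, ⟨w, hw, rfl⟩, hwy⟩ := hy _ (hV.image _) hdir _ isGLB_biInf (hVinf g)
  refine ⟨w, hw, fun h => ?_⟩
  by_cases hhg : h ≤ g
  · rw [stepMap, if_pos hhg]
    exact ((hVmax w hw).monotone hhg).trans hwy
  · rw [stepMap, if_neg hhg]
    exact le_top

theorem WayAboveMax.exists_le_le {u₁ u₂ : E → L} (hu₁ : WayAboveMax u₁ v)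
    (hu₂ : WayAboveMax u₂ v) :
    ∃ u, Maxitive u ∧ WayAboveMax u v ∧ (∀ g, u g ≤ u₁ g) ∧ (∀ g, u g ≤ u₂ g) := by
  set B := {w : E → L | Maxitive w ∧ (∀ g, w g ≤ u₁ g) ∧ (∀ g, w g ≤ u₂ g)}
  refine ⟨fun g => ⨆ w ∈ B, w g, maxitive_biSup B fun w hw => hw.1, ?_,
    fun g => iSup₂_le fun w hw => hw.2.1 g, fun g => iSup₂_le fun w hw => hw.2.2 g⟩
  intro V hVmax hV hVdir hVinf
  obtain ⟨w₁, hw₁, hw₁u⟩ := hu₁ V hVmax hV hVdir hVinf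
  obtain ⟨w₂, hw₂, hw₂u⟩ := hu₂ V hVmax hV hVdir hVinf
  obtain ⟨w, hw, hww₁, hww₂⟩ := hVdir w₁ hw₁ w₂ hw₂
  have hwB : w ∈ B :=
    ⟨hVmax w hw, fun g => (hww₁ g).trans (hw₁u g), fun g => (hww₂ g).trans (hw₂u g)⟩
  exact ⟨w, hw, fun g => le_iSup₂ (f := fun (w : E → L) (_ : w ∈ B) => w g) w hwB⟩

theorem DuallyContinuous.iInf_wayAboveMax_le (hL : DuallyContinuous L) (v : E → L) (g : E) :
    ⨅ u ∈ {u : E → L | Maxitive u ∧ WayAboveMax u v}, u g ≤ v g := by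
  rw [← (hL (v g)).2.2.sInf_eq]
  refine le_sInf fun y hy => ?_
  calc ⨅ u ∈ {u : E → L | Maxitive u ∧ WayAboveMax u v}, u g ≤ stepMap g y g :=
        iInf₂_le (f := fun (u : E → L) _ => u g) _
          ⟨maxitive_stepMap g y, WayAbove.wayAboveMax_stepMap hy⟩
    _ = y := if_pos le_rfl

end

/-- If `L` is a dually continuous complete lattice, the maxitive maps `E → L` form a
continuous lattice: pointwise suprema of maxitive maps are maxitive, and each maxitive
map is the infimum of the (nonempty, downward-directed) set of maxitive maps way above
it. -/
theorem maxitive_maps_continuous_lattice {E L : Type*} [PartialOrder E] [CompleteLattice L]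
    (hL : DuallyContinuous L) :
    (∀ W : Set (E → L), (∀ w ∈ W, Maxitive w) → Maxitive (fun g : E => ⨆ w ∈ W, w g)) ∧
    (∀ v : E → L, Maxitive v →
      {u : E → L | Maxitive u ∧ WayAboveMax u v}.Nonempty ∧
      (∀ u ∈ {u : E → L | Maxitive u ∧ WayAboveMax u v},
        ∀ u' ∈ {u : E → L | Maxitive u ∧ WayAboveMax u v},
          ∃ u'' ∈ {u : E → L | Maxitive u ∧ WayAboveMax u v},
            (∀ g : E, u'' g ≤ u g) ∧ (∀ g : E, u'' g ≤ u' g)) ∧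
      (∀ g : E, v g = ⨅ u ∈ {u : E → L | Maxitive u ∧ WayAboveMax u v}, u g)) := by
  refine ⟨maxitive_biSup, fun v hv => ⟨⟨_, maxitive_const ⊤, wayAboveMax_top v⟩, ?_, ?_⟩⟩
  · rintro u₁ ⟨-, hu₁⟩ u₂ ⟨-, hu₂⟩
    obtain ⟨u, hu, huv, hu₁', hu₂'⟩ := hu₁.exists_le_le hu₂
    exact ⟨u, ⟨hu, huv⟩, hu₁', hu₂'⟩
  · intro g
    exact le_antisymm (le_iInf₂ fun u hu => hu.2.le hv g) (hL.iInf_wayAboveMax_le v g)
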